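/- (Corollary in Appendix C.) Fix N ≥ 1. Let Q be a probability distribution over variables (a1,a2,a3,b,x1,x2,x3,y,λ) where a1,a2,a3,b,x1,x2 are binary, x3,y take values in {0,1,…,N}, and λ takes values in {0,1,⊥}. Suppose Q satisfies: (i) Q(x1,x2,x3,y) > 0 for all input values; (ii) λ ⫫_Q (x1,x2,x3,y); (iii) a1 ⫫_Q x2 | (x1, λ=0) and a2 ⫫_Q x1 | (x2, λ=1); (iv) (λ,b) ⫫_Q (x1,x2,x3) | y, (λ,a1,a2,a3) ⫫_Q y | (x1,x2,x3), and (λ,a1,a2) ⫫_Q (x3,y) | (x1,x2). Define R_Q(a,b | x3,y) := Q(a1=a, b | x1=x2=1, x3, y) if x3 = 0 and R_Q(a,b | x3,y) := Q(a3=a, b | x1=x2=0, x3, y) if x3 ≠ 0, define BC_N[R_Q] := Σ_{i=0}^{N−1} [R_Q(a=b | x3=i, y=i) + R_Q(a=b | x3=i+1, y=i)] + R_Q(a=b | x3=N, y=N) − R_Q(a=b | x3=0, y=N), and α[Q] := Q(a1=1 | x1x2=10) + Q(a2=1 | x1x2=01) + Q(a1=a2=0 | x1x2=11). If BC_N[R_Q]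 − 2N·α[Q] = (N+1)·(cos(π/(N+1)) + 1) − 1, then the fraction of runs with a definite causal order satisfies Q(λ ∈ {0,1}) ≤ (N+1)·(1 − cos(π/(N+1))). -/

import Mathlib

set_option synthInstance.maxSize 100000
set_option maxHeartbeats 1000000

/-- A configuration of the single-switch Braunstein–Caves scenario with a three-valued
hidden variable: binary `a1, a2, a3, b, x1, x2`, inputs `x3, y ∈ {0, 1, …, N}`, and
`λ ∈ {0, 1, ⊥}` (modelled as `Option Bool`, with `none` playing the role of `⊥`). -/
structure CfgO (N : ℕ) where
  a1 : Bool
  a2 : Bool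
  a3 : Bool
  b : Bool
  x1 : Bool
  x2 : Bool
  x3 : Fin (N + 1)
  y : Fin (N + 1)
  lam : Option Bool
deriving DecidableEq, Fintype

/-- The probability of the event `E` under the distribution `Q`. -/
def pr {N : ℕ} (Q : CfgO N → ℝ) (E : CfgO N → Prop) [DecidablePred E] : ℝ :=
  ∑ c : CfgO N, if E c then Q c else 0

/-- The conditional probability `Q(E | F) = Q(E ∧ F) / Q(F)`. -/
noncomputable def cpr {N : ℕ} (Q : CfgO N → ℝ) (E F : CfgO N → Prop)
    [DecidablePred E] [DecidablePred F] : ℝ :=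
  pr Q (fun c => E c ∧ F c) / pr Q F

/-- `R_Q(a = b | x3, y)`: the probability of `a = b` under the conditional distribution
`R_Q(a, b | x3, y)`, which is `Q(a1=a, b | x1=x2=1, x3, y)` for `x3 = 0` and
`Q(a3=a, b | x1=x2=0, x3, y)` for `x3 ≠ 0`. -/
noncomputable def Rab {N : ℕ} (Q : CfgO N → ℝ) (x3 y : Fin (N + 1)) : ℝ :=
  if x3 = 0 then
    cpr Q (fun c => c.a1 = c.b)
      (fun c => c.x1 = true ∧ c.x2 = true ∧ c.x3 = x3 ∧ c.y = y)
  else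
    cpr Q (fun c => c.a3 = c.b)
      (fun c => c.x1 = false ∧ c.x2 = false ∧ c.x3 = x3 ∧ c.y = y)

open Fin.NatCast in
/-- The Braunstein–Caves expression `BC_N[R_Q]`. -/
noncomputable def BC {N : ℕ} (Q : CfgO N → ℝ) : ℝ :=
  (∑ i ∈ Finset.range N, (Rab Q (i : Fin (N + 1)) (i : Fin (N + 1))
      + Rab Q ((i + 1 : ℕ) : Fin (N + 1)) (i : Fin (N + 1))))
    + Rab Q (N : Fin (N + 1)) (N : Fin (N + 1))
    - Rab Q 0 (N : Fin (N + 1))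

/-- The quantity `α[Q]`. -/
noncomputable def alphaQ {N : ℕ} (Q : CfgO N → ℝ) : ℝ :=
  cpr Q (fun c => c.a1 = true) (fun c => c.x1 = true ∧ c.x2 = false)
    + cpr Q (fun c => c.a2 = true) (fun c => c.x1 = false ∧ c.x2 = true)
    + cpr Q (fun c => c.a1 = false ∧ c.a2 = false) (fun c => c.x1 = true ∧ c.x2 = true)

/-!
Condition on the value of `λ`. By (ii) this does not change the distribution of the inputs,
so `BC` and `α` are the `Q(λ = l)`-weighted averages of the same quantities computed for the
conditional distributions. By (iv) every conditional distribution is no-signalling between `b`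
and the outputs `a1`, `a3`, and for such a distribution the chained Braunstein–Caves argument
gives `BC ≤ 2N + 2 Q(a1 = w | x1 = x2 = 1)` for either value `w`. Under `λ = 0`, (iii) gives
`Q(a1 = 1 | 11) = Q(a1 = 1 | 10) ≤ α`; under `λ = 1` it gives
`Q(a1 = 0 | 11) ≤ Q(a1 = a2 = 0 | 11) + Q(a2 = 1 | 01) ≤ α`. Hence `BC - 2Nα ≤ 2N` under a
definite order, while `BC - 2Nα ≤ 2N + 1` always. Averaging, `BC - 2Nα ≤ 2N + Q(λ = ⊥)`,
and the quantum value `(N+1)(cos(π/(N+1)) + 1) - 1` then forces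
`Q(λ ≠ ⊥) ≤ (N+1)(1 - cos(π/(N+1)))`.
-/
section Probability

variable {N : ℕ} {Q : CfgO N → ℝ}

theorem pr_congr {E F : CfgO N → Prop} [DecidablePred E] [DecidablePred F]
    (h : ∀ c, E c ↔ F c) : pr Q E = pr Q F :=
  Finset.sum_congr rfl fun c _ => if_congr (h c) rfl rfl

theorem pr_eq_zero_of_forall_not {E : CfgO N → Prop} [DecidablePred E] (h : ∀ c, ¬ E c) :
    pr Q E = 0 :=
  Finset.sum_eq_zero fun c _ => if_neg (h c)

theorem pr_nonneg (hQ : ∀ c, 0 ≤ Q c) (E : CfgO N → Prop) [DecidablePred E] : 0 ≤ pr Q E :=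
  Finset.sum_nonneg fun c _ => by split_ifs <;> simp [hQ c]

theorem pr_mono (hQ : ∀ c, 0 ≤ Q c) {E F : CfgO N → Prop} [DecidablePred E] [DecidablePred F]
    (h : ∀ c, E c → F c) : pr Q E ≤ pr Q F :=
  Finset.sum_le_sum fun c _ => by
    by_cases hE : E c <;> by_cases hF : F c <;> simp_all

theorem pr_eq_sum_fiber {V : Type*} [Fintype V] [DecidableEq V] (f : CfgO N → V)
    (E : CfgO N → Prop) [DecidablePred E] :
    pr Q E = ∑ v, pr Q (fun c => f c = v ∧ E c) := by
  unfold pr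
  rw [Finset.sum_comm]
  refine Finset.sum_congr rfl fun _ _ => ?_
  simp [ite_and]

theorem sum_pr_fiber {V : Type*} [Fintype V] [DecidableEq V] (f : CfgO N → V) :
    ∑ v, pr Q (fun c => f c = v) = ∑ c, Q c := by
  unfold pr
  rw [Finset.sum_comm]
  simp

theorem pr_add_pr_not (E : CfgO N → Prop) [DecidablePred E] :
    pr Q E + pr Q (fun c => ¬ E c) = ∑ c, Q c := by
  unfold pr
  rw [← Finset.sum_add_distrib]
  refine Finset.sum_congr rfl fun c _ => ?_
  by_cases hE : E c <;> simp [hE]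

theorem pr_and_eq_cpr_mul (hQ : ∀ c, 0 ≤ Q c) (E F : CfgO N → Prop)
    [DecidablePred E] [DecidablePred F] :
    pr Q (fun c => E c ∧ F c) = cpr Q E F * pr Q F := by
  rcases (pr_nonneg hQ F).eq_or_lt with hF | hF
  · rw [← hF, mul_zero]
    exact le_antisymm (hF ▸ pr_mono hQ fun _ hc => hc.2) (pr_nonneg hQ _)
  · rw [cpr, div_mul_cancel₀ _ hF.ne']

theorem cpr_nonneg (hQ : ∀ c, 0 ≤ Q c) (E F : CfgO N → Prop)
    [DecidablePred E] [DecidablePred F] : 0 ≤ cpr Q E F :=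
  div_nonneg (pr_nonneg hQ _) (pr_nonneg hQ _)

theorem cpr_le_one (hQ : ∀ c, 0 ≤ Q c) (E F : CfgO N → Prop)
    [DecidablePred E] [DecidablePred F] : cpr Q E F ≤ 1 :=
  div_le_one_of_le₀ (pr_mono hQ fun _ hc => hc.2) (pr_nonneg hQ _)

theorem cpr_add_cpr_not {F : CfgO N → Prop} [DecidablePred F] (hF : 0 < pr Q F)
    (E : CfgO N → Prop) [DecidablePred E] :
    cpr Q E F + cpr Q (fun c => ¬ E c) F = 1 := by
  rw [cpr, cpr, ← add_div, div_eq_one_iff_eq hF.ne']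
  unfold pr
  rw [← Finset.sum_add_distrib]
  refine Finset.sum_congr rfl fun c _ => ?_
  by_cases hE : E c <;> simp [hE]

theorem cpr_le_cpr_add (hQ : ∀ c, 0 ≤ Q c) {A B D F : CfgO N → Prop}
    [DecidablePred A] [DecidablePred B] [DecidablePred D] [DecidablePred F]
    (h : ∀ c, F c → A c → B c ∨ D c) :
    cpr Q A F ≤ cpr Q B F + cpr Q D F := by
  rw [cpr, cpr, cpr, ← add_div]
  refine div_le_div_of_nonneg_right ?_ (pr_nonneg hQ F)
  unfold pr
  rw [← Finset.sum_add_distrib]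
  refine Finset.sum_le_sum fun c _ => ?_
  have := hQ c
  have := h c
  by_cases hF : F c <;> by_cases hA : A c <;> by_cases hB : B c <;> by_cases hD : D c <;>
    simp_all

theorem abs_cpr_sub_cpr_le (hQ : ∀ c, 0 ≤ Q c) {A B D F : CfgO N → Prop}
    [DecidablePred A] [DecidablePred B] [DecidablePred D] [DecidablePred F]
    (h : ∀ c, F c → ¬ D c → (A c ↔ B c)) :
    |cpr Q A F - cpr Q B F| ≤ cpr Q D F := by
  have hAB := cpr_le_cpr_add hQ (A := A) (B := B) (D := D) (F := F) fun c hF hA =>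
    (em (D c)).elim Or.inr fun hD => Or.inl ((h c hF hD).1 hA)
  have hBA := cpr_le_cpr_add hQ (A := B) (B := A) (D := D) (F := F) fun c hF hB =>
    (em (D c)).elim Or.inr fun hD => Or.inl ((h c hF hD).2 hB)
  rw [abs_sub_le_iff]
  constructor <;> linarith

theorem cpr_eq_cpr_of_mul_eq {E F G : CfgO N → Prop}
    [DecidablePred E] [DecidablePred F] [DecidablePred G]
    (hF : pr Q F ≠ 0) (hG : pr Q G ≠ 0)
    (h : pr Q (fun c => E c ∧ F c) * pr Q G = pr Q (fun c => E c ∧ G c) * pr Q F) :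
    cpr Q E F = cpr Q E G := by
  rw [cpr, cpr, div_eq_div_iff hF hG]
  exact h

theorem mul_eq_mul_of_forall_fiber {V : Type*} [Fintype V] [DecidableEq V] (f : CfgO N → V)
    {E F G : CfgO N → Prop} [DecidablePred E] [DecidablePred F] [DecidablePred G]
    (h : ∀ v, pr Q (fun c => f c = v ∧ E c ∧ F c) * pr Q G
      = pr Q (fun c => f c = v ∧ E c ∧ G c) * pr Q F) :
    pr Q (fun c => E c ∧ F c) * pr Q G = pr Q (fun c => E c ∧ G c) * pr Q F := by
  rw [pr_eq_sum_fiber f (fun c => E c ∧ F c), pr_eq_sum_fiber f (fun c => E c ∧ G c),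
    Finset.sum_mul, Finset.sum_mul]
  exact Finset.sum_congr rfl fun v _ => h v

end Probability

def chainSum (N : ℕ) (R : ℕ → ℕ → ℝ) : ℝ :=
  (∑ i ∈ Finset.range N, (R i i + R (i + 1) i)) + R N N - R 0 N

theorem chainSum_le (N : ℕ) (R : ℕ → ℕ → ℝ) (β γ : ℕ → ℝ) (e : ℝ)
    (h0 : ∀ t, |R 0 t - β t| ≤ e)
    (h : ∀ s t, 1 ≤ s → s ≤ N → |γ s - β t| ≤ 1 - R s t) :
    chainSum N R ≤ 2 * N + 2 * e := by
  -- `R (i + 1) i` and `R (i + 1) (i + 1)` share the marginal `γ (i + 1)`, so together they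
  -- lose at most `β i - β (i + 1)`, and these losses telescope.
  have hpair : ∀ i ∈ Finset.range N,
      R (i + 1) i + R (i + 1) (i + 1) ≤ 2 + (β (i + 1) - β i) := by
    intro i hi
    have hiN : i + 1 ≤ N := Finset.mem_range.mp hi
    have h1 := (abs_sub_le_iff.mp (h (i + 1) i le_add_self hiN)).2
    have h2 := (abs_sub_le_iff.mp (h (i + 1) (i + 1) le_add_self hiN)).1
    linarith
  have hshift := Finset.sum_range_succ' (fun i => R i i) N
  rw [Finset.sum_range_succ] at hshift
  have hsum := Finset.sum_le_sum hpair
  have htelescope :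
      ∑ i ∈ Finset.range N, (2 + (β (i + 1) - β i)) = 2 * N + (β N - β 0) := by
    rw [Finset.sum_add_distrib, Finset.sum_range_sub β]
    simp [mul_comm]
  rw [htelescope, Finset.sum_add_distrib] at hsum
  have hR00 := (abs_sub_le_iff.mp (h0 0)).1
  have hR0N := (abs_sub_le_iff.mp (h0 N)).2
  unfold chainSum
  rw [Finset.sum_add_distrib]
  linarith

theorem chainSum_sum_mul {ι : Type*} (s : Finset ι) (N : ℕ) (w : ι → ℝ)
    (R : ι → ℕ → ℕ → ℝ) :
    chainSum N (fun a b => ∑ l ∈ s, w l * R l a b) = ∑ l ∈ s, w l * chainSum N (R l) := by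
  simp only [chainSum, mul_sub, mul_add, Finset.mul_sum, Finset.sum_sub_distrib,
    Finset.sum_add_distrib]
  rw [Finset.sum_comm (s := Finset.range N), Finset.sum_comm (s := Finset.range N)]

open Fin.NatCast in
theorem BC_eq_chainSum {N : ℕ} (Q : CfgO N → ℝ) :
    BC Q = chainSum N (fun s t => Rab Q s t) := by
  simp [BC, chainSum]

theorem chainSum_le_of_mem_Icc (N : ℕ) {R : ℕ → ℕ → ℝ}
    (hR : ∀ s t, R s t ∈ Set.Icc 0 1) : chainSum N R ≤ 2 * N + 1 := by
  have hsum :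
      ∑ i ∈ Finset.range N, (R i i + R (i + 1) i) ≤ ∑ _i ∈ Finset.range N, (2 : ℝ) :=
    Finset.sum_le_sum fun i _ => by linarith [(hR i i).2, (hR (i + 1) i).2]
  rw [Finset.sum_const, Finset.card_range, nsmul_eq_mul] at hsum
  unfold chainSum
  linarith [(hR N N).2, (hR 0 N).1]

theorem BC_le {N : ℕ} {P : CfgO N → ℝ} (hP : ∀ c, 0 ≤ P c) : BC P ≤ 2 * N + 1 := by
  rw [BC_eq_chainSum]
  refine chainSum_le_of_mem_Icc N fun s t => ?_
  unfold Rab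
  split_ifs
  · exact ⟨cpr_nonneg hP _ _, cpr_le_one hP _ _⟩
  · exact ⟨cpr_nonneg hP _ _, cpr_le_one hP _ _⟩

section Restriction

variable {N : ℕ} {Q : CfgO N → ℝ}

/-- `Q` restricted to the runs with `λ = l`. It is not normalised: `cpr` does not see the
normalisation, so `cpr (restrictLam Q l) E F` is the probability of `E` given `F` and `λ = l`. -/
def restrictLam (Q : CfgO N → ℝ) (l : Option Bool) : CfgO N → ℝ :=
  fun c => if c.lam = l then Q c else 0

theorem restrictLam_nonneg (hQ : ∀ c, 0 ≤ Q c) (l : Option Bool) (c : CfgO N) :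
    0 ≤ restrictLam Q l c := by
  unfold restrictLam
  split_ifs <;> simp [hQ c]

theorem pr_restrictLam (l : Option Bool) (E : CfgO N → Prop) [DecidablePred E] :
    pr (restrictLam Q l) E = pr Q (fun c => c.lam = l ∧ E c) := by
  unfold pr restrictLam
  refine Finset.sum_congr rfl fun c _ => ?_
  by_cases hl : c.lam = l <;> by_cases hE : E c <;> simp [hl, hE]

theorem pr_eq_sum_pr_restrictLam (E : CfgO N → Prop) [DecidablePred E] :
    pr Q E = ∑ l, pr (restrictLam Q l) E := by
  simp only [pr_restrictLam]
  exact pr_eq_sum_fiber CfgO.lam E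

def CfgO.inputs (c : CfgO N) : Bool × Bool × Fin (N + 1) × Fin (N + 1) :=
  (c.x1, c.x2, c.x3, c.y)

def IsInputEvent (F : CfgO N → Prop) : Prop :=
  ∀ c c' : CfgO N, c.inputs = c'.inputs → (F c ↔ F c')

def LamIndepInputs (Q : CfgO N → ℝ) : Prop :=
  ∀ (lv : Option Bool) (x1v x2v : Bool) (x3v yv : Fin (N + 1)),
    pr Q (fun c => c.lam = lv ∧ c.x1 = x1v ∧ c.x2 = x2v ∧ c.x3 = x3v ∧ c.y = yv)
      = pr Q (fun c => c.lam = lv)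
        * pr Q (fun c => c.x1 = x1v ∧ c.x2 = x2v ∧ c.x3 = x3v ∧ c.y = yv)

theorem pr_restrictLam_of_isInputEvent (hfree : LamIndepInputs Q) {F : CfgO N → Prop}
    [DecidablePred F] (hF : IsInputEvent F) (l : Option Bool) :
    pr (restrictLam Q l) F = pr Q (fun c => c.lam = l) * pr Q F := by
  rw [pr_restrictLam, pr_eq_sum_fiber CfgO.inputs, pr_eq_sum_fiber CfgO.inputs F, Finset.mul_sum]
  refine Finset.sum_congr rfl fun ⟨u1, u2, s, t⟩ _ => ?_
  by_cases hp : ∃ c₀, c₀.inputs = (u1, u2, s, t) ∧ F c₀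
  · obtain ⟨c₀, hc₀, hFc₀⟩ := hp
    have hfiber : ∀ c, c.inputs = (u1, u2, s, t) → F c :=
      fun c hc => (hF c c₀ (hc.trans hc₀.symm)).2 hFc₀
    rw [pr_congr (F := fun c => c.lam = l ∧ c.x1 = u1 ∧ c.x2 = u2 ∧ c.x3 = s ∧ c.y = t) ?_,
      pr_congr (E := fun c => c.inputs = (u1, u2, s, t) ∧ F c)
        (F := fun c => c.x1 = u1 ∧ c.x2 = u2 ∧ c.x3 = s ∧ c.y = t) ?_]
    · exact hfree l u1 u2 s t
    all_goals
      intro c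
      have := hfiber c
      simp only [CfgO.inputs, Prod.mk.injEq] at this ⊢
      tauto
  · push Not at hp
    have hjoint : pr Q (fun c => c.inputs = (u1, u2, s, t) ∧ c.lam = l ∧ F c) = 0 :=
      pr_eq_zero_of_forall_not fun c hc => hp c hc.1 hc.2.2
    have hmarginal : pr Q (fun c => c.inputs = (u1, u2, s, t) ∧ F c) = 0 :=
      pr_eq_zero_of_forall_not fun c hc => hp c hc.1 hc.2
    rw [hjoint, hmarginal, mul_zero]

theorem pr_restrictLam_pos (hfree : LamIndepInputs Q) {F : CfgO N → Prop} [DecidablePred F]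
    (hF : IsInputEvent F) {l : Option Bool} (hl : 0 < pr Q (fun c => c.lam = l))
    (hF0 : 0 < pr Q F) : 0 < pr (restrictLam Q l) F := by
  rw [pr_restrictLam_of_isInputEvent hfree hF]
  positivity

theorem cpr_restrictLam (hfree : LamIndepInputs Q) {F : CfgO N → Prop} [DecidablePred F]
    (hF : IsInputEvent F) (l : Option Bool) (E : CfgO N → Prop) [DecidablePred E] :
    cpr (restrictLam Q l) E F
      = cpr Q (fun c => c.lam = l ∧ E c) F / pr Q (fun c => c.lam = l) := by
  rw [cpr, cpr, pr_restrictLam_of_isInputEvent hfree hF, pr_restrictLam,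
    pr_congr (F := fun c => (c.lam = l ∧ E c) ∧ F c) fun c => and_assoc.symm,
    div_div, mul_comm]

theorem cpr_eq_sum_cpr_restrictLam (hQ : ∀ c, 0 ≤ Q c) (hfree : LamIndepInputs Q)
    {F : CfgO N → Prop} [DecidablePred F] (hF : IsInputEvent F) (hF0 : pr Q F ≠ 0)
    (E : CfgO N → Prop) [DecidablePred E] :
    cpr Q E F = ∑ l, pr Q (fun c => c.lam = l) * cpr (restrictLam Q l) E F := by
  rw [cpr, pr_eq_sum_pr_restrictLam, Finset.sum_div]
  refine Finset.sum_congr rfl fun l _ => ?_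
  rw [pr_and_eq_cpr_mul (restrictLam_nonneg hQ l), pr_restrictLam_of_isInputEvent hfree hF]
  field_simp

end Restriction

section Mixture

variable {N : ℕ} {Q : CfgO N → ℝ}

def InputsPositive (Q : CfgO N → ℝ) : Prop :=
  ∀ (x1v x2v : Bool) (x3v yv : Fin (N + 1)),
    0 < pr Q (fun c => c.x1 = x1v ∧ c.x2 = x2v ∧ c.x3 = x3v ∧ c.y = yv)

theorem InputsPositive.pr_pos (hQ : ∀ c, 0 ≤ Q c) (hin : InputsPositive Q)
    {F : CfgO N → Prop} [DecidablePred F] (u1 u2 : Bool) (s t : Fin (N + 1))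
    (h : ∀ c, c.x1 = u1 ∧ c.x2 = u2 ∧ c.x3 = s ∧ c.y = t → F c) : 0 < pr Q F :=
  (hin u1 u2 s t).trans_le (pr_mono hQ h)

theorem Rab_eq_sum_restrictLam (hQ : ∀ c, 0 ≤ Q c) (hfree : LamIndepInputs Q)
    (hin : InputsPositive Q) (s t : Fin (N + 1)) :
    Rab Q s t = ∑ l, pr Q (fun c => c.lam = l) * Rab (restrictLam Q l) s t := by
  unfold Rab
  split_ifs
  · exact cpr_eq_sum_cpr_restrictLam hQ hfree (fun c c' h => by simp_all [CfgO.inputs])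
      (hin true true s t).ne' _
  · exact cpr_eq_sum_cpr_restrictLam hQ hfree (fun c c' h => by simp_all [CfgO.inputs])
      (hin false false s t).ne' _

theorem BC_eq_sum_restrictLam (hQ : ∀ c, 0 ≤ Q c) (hfree : LamIndepInputs Q)
    (hin : InputsPositive Q) :
    BC Q = ∑ l, pr Q (fun c => c.lam = l) * BC (restrictLam Q l) := by
  simp only [BC_eq_chainSum, ← chainSum_sum_mul, Rab_eq_sum_restrictLam hQ hfree hin]

theorem alphaQ_eq_sum_restrictLam (hQ : ∀ c, 0 ≤ Q c) (hfree : LamIndepInputs Q)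
    (hin : InputsPositive Q) :
    alphaQ Q = ∑ l, pr Q (fun c => c.lam = l) * alphaQ (restrictLam Q l) := by
  have hpos : ∀ u1 u2 : Bool, pr Q (fun c => c.x1 = u1 ∧ c.x2 = u2) ≠ 0 := fun u1 u2 =>
    (hin.pr_pos hQ u1 u2 0 0 fun _ hc => ⟨hc.1, hc.2.1⟩).ne'
  unfold alphaQ
  rw [cpr_eq_sum_cpr_restrictLam hQ hfree (fun c c' h => by simp_all [CfgO.inputs]) (hpos _ _),
    cpr_eq_sum_cpr_restrictLam hQ hfree (fun c c' h => by simp_all [CfgO.inputs]) (hpos _ _),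
    cpr_eq_sum_cpr_restrictLam hQ hfree (fun c c' h => by simp_all [CfgO.inputs]) (hpos _ _),
    ← Finset.sum_add_distrib, ← Finset.sum_add_distrib]
  simp only [mul_add]

end Mixture

section ChainedBell

variable {N : ℕ} {P : CfgO N → ℝ}

open Fin.NatCast in
theorem BC_le_of_noSignalling (hP : ∀ c, 0 ≤ P c)
    (hpos : ∀ s t : Fin (N + 1),
      0 < pr P (fun c => c.x1 = false ∧ c.x2 = false ∧ c.x3 = s ∧ c.y = t))
    (hb : ∀ (v u1 u2 : Bool) (s t : Fin (N + 1)),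
      cpr P (fun c => c.b = v) (fun c => c.x1 = u1 ∧ c.x2 = u2 ∧ c.x3 = s ∧ c.y = t)
        = cpr P (fun c => c.b = v) (fun c => c.y = t))
    (ha3 : ∀ (v : Bool) (s t : Fin (N + 1)),
      cpr P (fun c => c.a3 = v) (fun c => c.x1 = false ∧ c.x2 = false ∧ c.x3 = s ∧ c.y = t)
        = cpr P (fun c => c.a3 = v) (fun c => c.x1 = false ∧ c.x2 = false ∧ c.x3 = s))
    (ha1 : ∀ (v : Bool) (t : Fin (N + 1)),
      cpr P (fun c => c.a1 = v) (fun c => c.x1 = true ∧ c.x2 = true ∧ c.x3 = 0 ∧ c.y = t)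
        = cpr P (fun c => c.a1 = v) (fun c => c.x1 = true ∧ c.x2 = true))
    (w : Bool) :
    BC P ≤ 2 * N + 2 * cpr P (fun c => c.a1 = w) (fun c => c.x1 = true ∧ c.x2 = true) := by
  rw [BC_eq_chainSum]
  refine chainSum_le N _ (fun t => cpr P (fun c => c.b = !w) (fun c => c.y = t))
    (fun s => cpr P (fun c => c.a3 = !w) (fun c => c.x1 = false ∧ c.x2 = false ∧ c.x3 = s))
    _ (fun t => ?_) (fun s t hs hsN => ?_)
  · -- off the error event `a1 = w`, `a1 = b` holds exactly when `b = !w`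
    rw [Nat.cast_zero, Rab, if_pos rfl, ← hb, ← ha1 w t]
    refine abs_cpr_sub_cpr_le hP fun c _ => ?_
    cases c.a1 <;> cases c.b <;> cases w <;> simp
  · have hs0 : ((s : ℕ) : Fin (N + 1)) ≠ 0 := by
      rw [Ne, Fin.natCast_eq_zero]
      exact fun hdvd => by have := Nat.le_of_dvd (by omega) hdvd; omega
    have hcompl := cpr_add_cpr_not (hpos s t) (fun c => c.a3 = c.b)
    rw [Rab, if_neg hs0, ← ha3, ← hb _ false false]
    refine (abs_cpr_sub_cpr_le hP (D := fun c => ¬ c.a3 = c.b) fun c _ hab => ?_).trans_eq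
      (by linarith)
    simp_all

end ChainedBell

section Causality

variable {N : ℕ} {Q : CfgO N → ℝ}

def RelativisticCausality (Q : CfgO N → ℝ) : Prop :=
  (∀ (lv : Option Bool) (bv x1v x2v : Bool) (x3v yv : Fin (N + 1)),
    pr Q (fun c => c.lam = lv ∧ c.b = bv ∧
          c.x1 = x1v ∧ c.x2 = x2v ∧ c.x3 = x3v ∧ c.y = yv)
        * pr Q (fun c => c.y = yv)
      = pr Q (fun c => c.lam = lv ∧ c.b = bv ∧ c.y = yv)
        * pr Q (fun c => c.x1 = x1v ∧ c.x2 = x2v ∧ c.x3 = x3v ∧ c.y = yv))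
  ∧ (∀ (lv : Option Bool) (a1v a2v a3v x1v x2v : Bool) (x3v yv : Fin (N + 1)),
    pr Q (fun c => c.lam = lv ∧ c.a1 = a1v ∧ c.a2 = a2v ∧ c.a3 = a3v ∧
          c.x1 = x1v ∧ c.x2 = x2v ∧ c.x3 = x3v ∧ c.y = yv)
        * pr Q (fun c => c.x1 = x1v ∧ c.x2 = x2v ∧ c.x3 = x3v)
      = pr Q (fun c => c.lam = lv ∧ c.a1 = a1v ∧ c.a2 = a2v ∧ c.a3 = a3v ∧
          c.x1 = x1v ∧ c.x2 = x2v ∧ c.x3 = x3v)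
        * pr Q (fun c => c.x1 = x1v ∧ c.x2 = x2v ∧ c.x3 = x3v ∧ c.y = yv))
  ∧ (∀ (lv : Option Bool) (a1v a2v x1v x2v : Bool) (x3v yv : Fin (N + 1)),
    pr Q (fun c => c.lam = lv ∧ c.a1 = a1v ∧ c.a2 = a2v ∧
          c.x1 = x1v ∧ c.x2 = x2v ∧ c.x3 = x3v ∧ c.y = yv)
        * pr Q (fun c => c.x1 = x1v ∧ c.x2 = x2v)
      = pr Q (fun c => c.lam = lv ∧ c.a1 = a1v ∧ c.a2 = a2v ∧
          c.x1 = x1v ∧ c.x2 = x2v)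
        * pr Q (fun c => c.x1 = x1v ∧ c.x2 = x2v ∧ c.x3 = x3v ∧ c.y = yv))

theorem cpr_restrictLam_b (hQ : ∀ c, 0 ≤ Q c) (hfree : LamIndepInputs Q)
    (hin : InputsPositive Q) (hRC : RelativisticCausality Q)
    (l : Option Bool) (v u1 u2 : Bool) (s t : Fin (N + 1)) :
    cpr (restrictLam Q l) (fun c => c.b = v)
        (fun c => c.x1 = u1 ∧ c.x2 = u2 ∧ c.x3 = s ∧ c.y = t)
      = cpr (restrictLam Q l) (fun c => c.b = v) (fun c => c.y = t) := by
  rw [cpr_restrictLam hfree (fun c c' h => by simp_all [CfgO.inputs]),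
    cpr_restrictLam hfree (fun c c' h => by simp_all [CfgO.inputs])]
  congr 1
  refine cpr_eq_cpr_of_mul_eq (hin u1 u2 s t).ne'
    (hin.pr_pos hQ u1 u2 s t fun _ hc => hc.2.2.2).ne' ?_
  simpa only [and_assoc] using hRC.1 l v u1 u2 s t

theorem cpr_restrictLam_a3 (hQ : ∀ c, 0 ≤ Q c) (hfree : LamIndepInputs Q)
    (hin : InputsPositive Q) (hRC : RelativisticCausality Q)
    (l : Option Bool) (v : Bool) (s t : Fin (N + 1)) :
    cpr (restrictLam Q l) (fun c => c.a3 = v)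
        (fun c => c.x1 = false ∧ c.x2 = false ∧ c.x3 = s ∧ c.y = t)
      = cpr (restrictLam Q l) (fun c => c.a3 = v)
        (fun c => c.x1 = false ∧ c.x2 = false ∧ c.x3 = s) := by
  rw [cpr_restrictLam hfree (fun c c' h => by simp_all [CfgO.inputs]),
    cpr_restrictLam hfree (fun c c' h => by simp_all [CfgO.inputs])]
  congr 1
  refine cpr_eq_cpr_of_mul_eq (hin false false s t).ne'
    (hin.pr_pos hQ false false s t fun _ hc => ⟨hc.1, hc.2.1, hc.2.2.1⟩).ne' ?_
  refine mul_eq_mul_of_forall_fiber (fun c => (c.a1, c.a2)) fun ⟨v1, v2⟩ => ?_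
  convert hRC.2.1 l v1 v2 v false false s t using 2 <;>
    exact pr_congr fun c => by simp only [Prod.mk.injEq]; tauto

theorem cpr_restrictLam_a1 (hQ : ∀ c, 0 ≤ Q c) (hfree : LamIndepInputs Q)
    (hin : InputsPositive Q) (hRC : RelativisticCausality Q)
    (l : Option Bool) (v : Bool) (t : Fin (N + 1)) :
    cpr (restrictLam Q l) (fun c => c.a1 = v)
        (fun c => c.x1 = true ∧ c.x2 = true ∧ c.x3 = 0 ∧ c.y = t)
      = cpr (restrictLam Q l) (fun c => c.a1 = v) (fun c => c.x1 = true ∧ c.x2 = true) := by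
  rw [cpr_restrictLam hfree (fun c c' h => by simp_all [CfgO.inputs]),
    cpr_restrictLam hfree (fun c c' h => by simp_all [CfgO.inputs])]
  congr 1
  refine cpr_eq_cpr_of_mul_eq (hin true true 0 t).ne'
    (hin.pr_pos hQ true true 0 t fun _ hc => ⟨hc.1, hc.2.1⟩).ne' ?_
  refine mul_eq_mul_of_forall_fiber CfgO.a2 fun v2 => ?_
  convert hRC.2.2 l v v2 true true 0 t using 2 <;> exact pr_congr fun c => by tauto

end Causality

section Alpha

variable {N : ℕ} {P : CfgO N → ℝ}

theorem alphaQ_nonneg (hP : ∀ c, 0 ≤ P c) : 0 ≤ alphaQ P := by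
  unfold alphaQ
  have := cpr_nonneg hP (fun c => c.a1 = true) (fun c => c.x1 = true ∧ c.x2 = false)
  have := cpr_nonneg hP (fun c => c.a2 = true) (fun c => c.x1 = false ∧ c.x2 = true)
  have := cpr_nonneg hP (fun c => c.a1 = false ∧ c.a2 = false)
    (fun c => c.x1 = true ∧ c.x2 = true)
  linarith

theorem cpr_a1_true_le_alphaQ (hP : ∀ c, 0 ≤ P c)
    (h : cpr P (fun c => c.a1 = true) (fun c => c.x1 = true ∧ c.x2 = true)
      = cpr P (fun c => c.a1 = true) (fun c => c.x1 = true ∧ c.x2 = false)) :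
    cpr P (fun c => c.a1 = true) (fun c => c.x1 = true ∧ c.x2 = true) ≤ alphaQ P := by
  unfold alphaQ
  have := cpr_nonneg hP (fun c => c.a2 = true) (fun c => c.x1 = false ∧ c.x2 = true)
  have := cpr_nonneg hP (fun c => c.a1 = false ∧ c.a2 = false)
    (fun c => c.x1 = true ∧ c.x2 = true)
  linarith

theorem cpr_a1_false_le_alphaQ (hP : ∀ c, 0 ≤ P c)
    (h : cpr P (fun c => c.a2 = true) (fun c => c.x1 = true ∧ c.x2 = true)
      = cpr P (fun c => c.a2 = true) (fun c => c.x1 = false ∧ c.x2 = true)) :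
    cpr P (fun c => c.a1 = false) (fun c => c.x1 = true ∧ c.x2 = true) ≤ alphaQ P := by
  have hsplit := cpr_le_cpr_add hP (A := fun c => c.a1 = false)
    (B := fun c => c.a1 = false ∧ c.a2 = false) (D := fun c => c.a2 = true)
    (F := fun c => c.x1 = true ∧ c.x2 = true) fun c _ ha1 => by
      cases ha2 : c.a2 <;> simp [ha1]
  unfold alphaQ
  have := cpr_nonneg hP (fun c => c.a1 = true) (fun c => c.x1 = true ∧ c.x2 = false)
  linarith

end Alpha

section DefiniteOrder

variable {N : ℕ} {Q : CfgO N → ℝ}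

def OrderedByLam (Q : CfgO N → ℝ) : Prop :=
  (∀ a1v x2v x1v : Bool,
    pr Q (fun c => c.a1 = a1v ∧ c.x2 = x2v ∧ c.x1 = x1v ∧ c.lam = some false)
        * pr Q (fun c => c.x1 = x1v ∧ c.lam = some false)
      = pr Q (fun c => c.a1 = a1v ∧ c.x1 = x1v ∧ c.lam = some false)
        * pr Q (fun c => c.x2 = x2v ∧ c.x1 = x1v ∧ c.lam = some false))
  ∧ (∀ a2v x1v x2v : Bool,
    pr Q (fun c => c.a2 = a2v ∧ c.x1 = x1v ∧ c.x2 = x2v ∧ c.lam = some true)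
        * pr Q (fun c => c.x2 = x2v ∧ c.lam = some true)
      = pr Q (fun c => c.a2 = a2v ∧ c.x2 = x2v ∧ c.lam = some true)
        * pr Q (fun c => c.x1 = x1v ∧ c.x2 = x2v ∧ c.lam = some true))

theorem cpr_restrictLam_false_a1 (hQ : ∀ c, 0 ≤ Q c) (hfree : LamIndepInputs Q)
    (hin : InputsPositive Q) (hord : OrderedByLam Q)
    (hl : 0 < pr Q (fun c => c.lam = some false)) :
    cpr (restrictLam Q (some false)) (fun c => c.a1 = true) (fun c => c.x1 = true ∧ c.x2 = true)
      = cpr (restrictLam Q (some false)) (fun c => c.a1 = true)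
          (fun c => c.x1 = true ∧ c.x2 = false) := by
  have hx2 : ∀ w, cpr (restrictLam Q (some false)) (fun c => c.a1 = true)
      (fun c => c.x1 = true ∧ c.x2 = w)
        = cpr (restrictLam Q (some false)) (fun c => c.a1 = true) (fun c => c.x1 = true) :=
    fun w => cpr_eq_cpr_of_mul_eq
      (pr_restrictLam_pos hfree (fun c c' h => by simp_all [CfgO.inputs]) hl
        (hin.pr_pos hQ true w 0 0 fun _ hc => ⟨hc.1, hc.2.1⟩)).ne'
      (pr_restrictLam_pos hfree (fun c c' h => by simp_all [CfgO.inputs]) hl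
        (hin.pr_pos hQ true w 0 0 fun _ hc => hc.1)).ne'
      (by
        simp only [pr_restrictLam]
        convert hord.1 true w true using 2 <;> exact pr_congr fun c => by tauto)
  rw [hx2, hx2]

theorem cpr_restrictLam_true_a2 (hQ : ∀ c, 0 ≤ Q c) (hfree : LamIndepInputs Q)
    (hin : InputsPositive Q) (hord : OrderedByLam Q)
    (hl : 0 < pr Q (fun c => c.lam = some true)) :
    cpr (restrictLam Q (some true)) (fun c => c.a2 = true) (fun c => c.x1 = true ∧ c.x2 = true)
      = cpr (restrictLam Q (some true)) (fun c => c.a2 = true)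
          (fun c => c.x1 = false ∧ c.x2 = true) := by
  have hx1 : ∀ u, cpr (restrictLam Q (some true)) (fun c => c.a2 = true)
      (fun c => c.x1 = u ∧ c.x2 = true)
        = cpr (restrictLam Q (some true)) (fun c => c.a2 = true) (fun c => c.x2 = true) :=
    fun u => cpr_eq_cpr_of_mul_eq
      (pr_restrictLam_pos hfree (fun c c' h => by simp_all [CfgO.inputs]) hl
        (hin.pr_pos hQ u true 0 0 fun _ hc => ⟨hc.1, hc.2.1⟩)).ne'
      (pr_restrictLam_pos hfree (fun c c' h => by simp_all [CfgO.inputs]) hl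
        (hin.pr_pos hQ u true 0 0 fun _ hc => hc.2.1)).ne'
      (by
        simp only [pr_restrictLam]
        convert hord.2 true u true using 2 <;> exact pr_congr fun c => by tauto)
  rw [hx1, hx1]

theorem BC_restrictLam_le (hQ : ∀ c, 0 ≤ Q c) (hfree : LamIndepInputs Q)
    (hin : InputsPositive Q) (hRC : RelativisticCausality Q) {l : Option Bool}
    (hl : 0 < pr Q (fun c => c.lam = l)) (w : Bool) :
    BC (restrictLam Q l) ≤ 2 * N
      + 2 * cpr (restrictLam Q l) (fun c => c.a1 = w) (fun c => c.x1 = true ∧ c.x2 = true) :=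
  BC_le_of_noSignalling (restrictLam_nonneg hQ l)
    (fun s t => pr_restrictLam_pos hfree (fun c c' h => by simp_all [CfgO.inputs]) hl
      (hin false false s t))
    (cpr_restrictLam_b hQ hfree hin hRC l) (cpr_restrictLam_a3 hQ hfree hin hRC l)
    (cpr_restrictLam_a1 hQ hfree hin hRC l) w

theorem BC_sub_alphaQ_restrictLam_some_le (hN : 1 ≤ N) (hQ : ∀ c, 0 ≤ Q c)
    (hfree : LamIndepInputs Q) (hin : InputsPositive Q) (hRC : RelativisticCausality Q)
    (hord : OrderedByLam Q) (b : Bool) (hl : 0 < pr Q (fun c => c.lam = some b)) :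
    BC (restrictLam Q (some b)) - 2 * N * alphaQ (restrictLam Q (some b)) ≤ 2 * N := by
  have hP := restrictLam_nonneg hQ (some b)
  obtain ⟨w, hBC, hw⟩ : ∃ w, BC (restrictLam Q (some b)) ≤ 2 * N
      + 2 * cpr (restrictLam Q (some b)) (fun c => c.a1 = w) (fun c => c.x1 = true ∧ c.x2 = true)
      ∧ cpr (restrictLam Q (some b)) (fun c => c.a1 = w) (fun c => c.x1 = true ∧ c.x2 = true)
        ≤ alphaQ (restrictLam Q (some b)) := by
    cases b
    · exact ⟨true, BC_restrictLam_le hQ hfree hin hRC hl true,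
        cpr_a1_true_le_alphaQ hP (cpr_restrictLam_false_a1 hQ hfree hin hord hl)⟩
    · exact ⟨false, BC_restrictLam_le hQ hfree hin hRC hl false,
        cpr_a1_false_le_alphaQ hP (cpr_restrictLam_true_a2 hQ hfree hin hord hl)⟩
  have hα := alphaQ_nonneg hP
  have hN' : (1 : ℝ) ≤ N := by exact_mod_cast hN
  nlinarith

end DefiniteOrder

theorem BC_sub_alphaQ_le {N : ℕ} {Q : CfgO N → ℝ} (hN : 1 ≤ N) (hQ : ∀ c, 0 ≤ Q c)
    (hfree : LamIndepInputs Q) (hin : InputsPositive Q) (hRC : RelativisticCausality Q)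
    (hord : OrderedByLam Q) :
    BC Q - 2 * N * alphaQ Q ≤ 2 * N * ∑ c, Q c + pr Q (fun c => c.lam = none) := by
  set q : Option Bool → ℝ := fun l => pr Q (fun c => c.lam = l) with hq
  have hmix : BC Q - 2 * N * alphaQ Q
      = ∑ l, q l * (BC (restrictLam Q l) - 2 * N * alphaQ (restrictLam Q l)) := by
    rw [BC_eq_sum_restrictLam hQ hfree hin, alphaQ_eq_sum_restrictLam hQ hfree hin,
      Finset.mul_sum, ← Finset.sum_sub_distrib]
    exact Finset.sum_congr rfl fun l _ => by ring
  have htotal : ∑ l, q l = ∑ c, Q c := sum_pr_fiber CfgO.lam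
  have hsome : ∀ b : Bool, q (some b) * (BC (restrictLam Q (some b))
      - 2 * N * alphaQ (restrictLam Q (some b))) ≤ q (some b) * (2 * N) := by
    intro b
    rcases (pr_nonneg hQ fun c => c.lam = some b).eq_or_lt with h0 | hpos
    · simp [hq, ← h0]
    · exact mul_le_mul_of_nonneg_left
        (BC_sub_alphaQ_restrictLam_some_le hN hQ hfree hin hRC hord b hpos) hpos.le
  have hnone : q none * (BC (restrictLam Q none) - 2 * N * alphaQ (restrictLam Q none))
      ≤ q none * (2 * N + 1) := by
    have hP := restrictLam_nonneg hQ none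
    refine mul_le_mul_of_nonneg_left ?_ (pr_nonneg hQ _)
    nlinarith [BC_le hP, alphaQ_nonneg hP]
  rw [hmix, ← htotal]
  simp only [Fintype.sum_option, Fintype.sum_bool] at hsome ⊢
  linarith [hsome true, hsome false]

/-- **Corollary in Appendix C.**  If the data reach the quantum value of
the causal Braunstein–Caves expression, then the fraction of runs with a definite causal
order is at most `(N+1)(1 − cos(π/(N+1)))`. -/
theorem stmt11 (N : ℕ) (hN : 1 ≤ N) (Q : CfgO N → ℝ)
    -- `Q` is a probability distribution
    (hnn : ∀ c, 0 ≤ Q c)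
    (hsum : (∑ c : CfgO N, Q c) = 1)
    -- (i) all inputs have positive probability
    (hin : ∀ (x1v x2v : Bool) (x3v yv : Fin (N + 1)),
      0 < pr Q (fun c => c.x1 = x1v ∧ c.x2 = x2v ∧ c.x3 = x3v ∧ c.y = yv))
    -- (ii) `λ ⫫ (x1, x2, x3, y)`
    (hfree : ∀ (lv : Option Bool) (x1v x2v : Bool) (x3v yv : Fin (N + 1)),
      pr Q (fun c => c.lam = lv ∧ c.x1 = x1v ∧ c.x2 = x2v ∧ c.x3 = x3v ∧ c.y = yv)
        = pr Q (fun c => c.lam = lv)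
          * pr Q (fun c => c.x1 = x1v ∧ c.x2 = x2v ∧ c.x3 = x3v ∧ c.y = yv))
    -- (iii) `a1 ⫫ x2 | (x1, λ=0)` and `a2 ⫫ x1 | (x2, λ=1)`
    (hA0 : ∀ a1v x2v x1v : Bool,
      pr Q (fun c => c.a1 = a1v ∧ c.x2 = x2v ∧ c.x1 = x1v ∧ c.lam = some false)
          * pr Q (fun c => c.x1 = x1v ∧ c.lam = some false)
        = pr Q (fun c => c.a1 = a1v ∧ c.x1 = x1v ∧ c.lam = some false)
          * pr Q (fun c => c.x2 = x2v ∧ c.x1 = x1v ∧ c.lam = some false))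
    (hA1 : ∀ a2v x1v x2v : Bool,
      pr Q (fun c => c.a2 = a2v ∧ c.x1 = x1v ∧ c.x2 = x2v ∧ c.lam = some true)
          * pr Q (fun c => c.x2 = x2v ∧ c.lam = some true)
        = pr Q (fun c => c.a2 = a2v ∧ c.x2 = x2v ∧ c.lam = some true)
          * pr Q (fun c => c.x1 = x1v ∧ c.x2 = x2v ∧ c.lam = some true))
    -- (iv) `(λ, b) ⫫ (x1, x2, x3) | y`
    (hRC1 : ∀ (lv : Option Bool) (bv x1v x2v : Bool) (x3v yv : Fin (N + 1)),
      pr Q (fun c => c.lam = lv ∧ c.b = bv ∧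
            c.x1 = x1v ∧ c.x2 = x2v ∧ c.x3 = x3v ∧ c.y = yv)
          * pr Q (fun c => c.y = yv)
        = pr Q (fun c => c.lam = lv ∧ c.b = bv ∧ c.y = yv)
          * pr Q (fun c => c.x1 = x1v ∧ c.x2 = x2v ∧ c.x3 = x3v ∧ c.y = yv))
    -- `(λ, a1, a2, a3) ⫫ y | (x1, x2, x3)`
    (hRC2 : ∀ (lv : Option Bool) (a1v a2v a3v x1v x2v : Bool) (x3v yv : Fin (N + 1)),
      pr Q (fun c => c.lam = lv ∧ c.a1 = a1v ∧ c.a2 = a2v ∧ c.a3 = a3v ∧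
            c.x1 = x1v ∧ c.x2 = x2v ∧ c.x3 = x3v ∧ c.y = yv)
          * pr Q (fun c => c.x1 = x1v ∧ c.x2 = x2v ∧ c.x3 = x3v)
        = pr Q (fun c => c.lam = lv ∧ c.a1 = a1v ∧ c.a2 = a2v ∧ c.a3 = a3v ∧
            c.x1 = x1v ∧ c.x2 = x2v ∧ c.x3 = x3v)
          * pr Q (fun c => c.x1 = x1v ∧ c.x2 = x2v ∧ c.x3 = x3v ∧ c.y = yv))
    -- `(λ, a1, a2) ⫫ (x3, y) | (x1, x2)`
    (hRC3 : ∀ (lv : Option Bool) (a1v a2v x1v x2v : Bool) (x3v yv : Fin (N + 1)),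
      pr Q (fun c => c.lam = lv ∧ c.a1 = a1v ∧ c.a2 = a2v ∧
            c.x1 = x1v ∧ c.x2 = x2v ∧ c.x3 = x3v ∧ c.y = yv)
          * pr Q (fun c => c.x1 = x1v ∧ c.x2 = x2v)
        = pr Q (fun c => c.lam = lv ∧ c.a1 = a1v ∧ c.a2 = a2v ∧
            c.x1 = x1v ∧ c.x2 = x2v)
          * pr Q (fun c => c.x1 = x1v ∧ c.x2 = x2v ∧ c.x3 = x3v ∧ c.y = yv))
    -- the data attain the quantum value of the causal Braunstein–Caves expression
    (hquantum : BC Q - 2 * (N : ℝ) * alphaQ Q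
      = ((N : ℝ) + 1) * (Real.cos (Real.pi / ((N : ℝ) + 1)) + 1) - 1) :
    pr Q (fun c => c.lam ≠ none)
      ≤ ((N : ℝ) + 1) * (1 - Real.cos (Real.pi / ((N : ℝ) + 1))) := by
  have hbound := BC_sub_alphaQ_le hN hnn hfree hin ⟨hRC1, hRC2, hRC3⟩ ⟨hA0, hA1⟩
  have hdefinite := pr_add_pr_not (Q := Q) (fun c => c.lam = none)
  rw [hsum] at hbound hdefinite
  change pr Q (fun c => ¬ c.lam = none) ≤ _
  linarith
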